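/- arXiv:2306.07761 — 3 statements merged into one kernel-verified Lean document; each statement's English description precedes it below -/
import Mathlib

section
/- Let K be a finite set with at least two elements and a distinguished element a, let c be a real number, and let UCB, LCB : K → ℝ satisfy LCB(k) ≤ UCB(k) for all k ∈ K. Let ℓ ∈ K attain the maximum of UCB over K, and let u attain the maximum of UCB over K ∖ {ℓ}. Assume (i) LCB(ℓ) ≤ UCB(u), (ii) LCB(k) ≤ c for every k ≠ a, and (iii) UCB(a) ≥ c. Then LCB(ℓ) ≤ c ≤ UCB(ℓ) or LCB(u) ≤ c ≤ UCB(u). -/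
/-- Step 1 of the LUCB cost complexity upper bound proof (Theorem 3): if the stopping
condition has not triggered and no confidence interval incorrectly crosses the
threshold `c`, then one of the two critical arms `ℓ`, `u` has its confidence interval
containing `c`. -/
theorem stmt_2 {K : Type*} [Fintype K] (hcard : 1 < Fintype.card K)
    (a : K) (c : ℝ) (UCB LCB : K → ℝ) (hint : ∀ k, LCB k ≤ UCB k)
    (ℓ u : K) (hℓ : ∀ k, UCB k ≤ UCB ℓ)
    (hu_ne : u ≠ ℓ) (hu : ∀ k, k ≠ ℓ → UCB k ≤ UCB u)
    (hterm : LCB ℓ ≤ UCB u)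
    (hcros1 : ∀ k, k ≠ a → LCB k ≤ c) (hcros2 : c ≤ UCB a) :
    (LCB ℓ ≤ c ∧ c ≤ UCB ℓ) ∨ (LCB u ≤ c ∧ c ≤ UCB u) := by
  by_cases ha : a = ℓ
  · subst ha
    by_cases hcu : c ≤ UCB u
    · exact Or.inr ⟨hcros1 u hu_ne, hcu⟩
    · exact Or.inl ⟨hterm.trans (le_of_not_ge hcu), hcros2⟩
  · exact Or.inl ⟨hcros1 ℓ (fun h => ha h.symm), hcros2.trans (hℓ a)⟩
end

section
/- Let M be a finite nonempty index set, let f, g : M → ℝ, and let c ≥ 0 satisfy |f(m) − g(m)| ≤ c for all m ∈ M. Let m̂ ∈ M attain the maximum of g over M. If g(m̂) > 3c, then f(m̂) > 0 and 2·f(m̂) ≥ f(m) for every m ∈ M. -/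
/-- Abstract core of Lemma B.2 (good-fidelity guarantee for Explore-B): if the
empirical maximizer `m̂` of `g` satisfies the commit condition `g m̂ > 3c`, then the
committed fidelity is at least half as good as any other. -/
theorem stmt_3 {M : Type*} [Fintype M] [Nonempty M]
    (f g : M → ℝ) (c : ℝ) (hc : 0 ≤ c) (hfg : ∀ m, |f m - g m| ≤ c)
    (mhat : M) (hmax : ∀ m, g m ≤ g mhat) (hcommit : 3 * c < g mhat) :
    0 < f mhat ∧ ∀ m, f m ≤ 2 * f mhat := by
  have h1 := abs_sub_le_iff.mp (hfg mhat)
  constructor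
  · linarith [h1.1, h1.2]
  · intro m
    have h2 := abs_sub_le_iff.mp (hfg m)
    have := hmax m
    linarith [h1.1, h1.2, h2.1, h2.2]
end

section
/- Let H ≥ 0, G ≥ 0 be real numbers, let C ≥ e^e and a > 0, set W = a·(G + H), and assume W ≥ e^e. Then G·log log( a·C·( H·log W + G·log log W ) ) ≤ (4 + 2·log log C)·G·log log W. -/
/-- Inequality (C.2) in the proof of the cost complexity upper bound for Explore-A
(Theorem 3), with `a = L/(λ⁽¹⁾·δ)` and `W = a·(G + H)`:
`G·log log(a·C·(H·log W + G·log log W)) ≤ (4 + 2·log log C)·G·log log W`. -/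
theorem stmt_13 (H G C a W : ℝ) (hH : 0 ≤ H) (hG : 0 ≤ G)
    (hC : Real.exp (Real.exp 1) ≤ C) (ha : 0 < a)
    (hW : W = a * (G + H)) (hWe : Real.exp (Real.exp 1) ≤ W) :
    G * Real.log (Real.log (a * C * (H * Real.log W + G * Real.log (Real.log W))))
      ≤ (4 + 2 * Real.log (Real.log C)) * (G * Real.log (Real.log W)) := by
  have he2 : (2:ℝ) ≤ Real.exp 1 := by
    have := Real.exp_one_gt_d9; linarith
  have hWpos : (0:ℝ) < W := lt_of_lt_of_le (Real.exp_pos _) hWe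
  have hCpos : (0:ℝ) < C := lt_of_lt_of_le (Real.exp_pos _) hC
  have hlogW : Real.exp 1 ≤ Real.log W := by
    have := Real.log_le_log (Real.exp_pos _) hWe
    rwa [Real.log_exp] at this
  have hlogC : Real.exp 1 ≤ Real.log C := by
    have := Real.log_le_log (Real.exp_pos _) hC
    rwa [Real.log_exp] at this
  have hLW1 : (1:ℝ) ≤ Real.log W := by linarith
  have hLC1 : (1:ℝ) ≤ Real.log C := by linarith
  have hLLW1 : (1:ℝ) ≤ Real.log (Real.log W) := by
    have := Real.log_le_log (Real.exp_pos 1) hlogW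
    rwa [Real.log_exp] at this
  have hLLC1 : (1:ℝ) ≤ Real.log (Real.log C) := by
    have := Real.log_le_log (Real.exp_pos 1) hlogC
    rwa [Real.log_exp] at this
  rcases eq_or_lt_of_le hG with hG0 | hGpos
  · simp [← hG0]
  -- G > 0
  have hGH : 0 < G + H := by positivity
  set L := Real.log W with hL
  set LL := Real.log (Real.log W) with hLL
  set X := a * C * (H * L + G * LL) with hX
  have hXlb : C * W ≤ X := by
    rw [hX, hW]
    nlinarith [mul_pos ha hCpos, mul_nonneg hH (by linarith : (0:ℝ) ≤ L - 1),
      mul_nonneg hG (by linarith : (0:ℝ) ≤ LL - 1)]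
  have hLLleL : LL ≤ L := Real.log_le_self (by linarith)
  have hLleW : L ≤ W := Real.log_le_self hWpos.le
  have hXub : X ≤ C * (W * W) := by
    have h1 : X ≤ a * C * ((G + H) * L) := by
      rw [hX]
      nlinarith [mul_pos ha hCpos, mul_nonneg hG (by linarith : (0:ℝ) ≤ L - LL)]
    have h2 : a * C * ((G + H) * L) = C * (W * L) := by rw [hW]; ring
    have h3 : C * (W * L) ≤ C * (W * W) := by nlinarith
    linarith
  have hee1 : (1:ℝ) < Real.exp (Real.exp 1) := by
    have h := Real.exp_lt_exp.mpr (Real.exp_pos 1)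
    simpa using h
  have hCW1 : (1:ℝ) < C * W := by nlinarith
  have hXpos : (0:ℝ) < X := lt_trans (by linarith) (lt_of_lt_of_le hCW1 hXlb)
  have hlogXpos : 0 < Real.log X := Real.log_pos (lt_of_lt_of_le hCW1 hXlb)
  have hlogXub : Real.log X ≤ Real.log C + 2 * L := by
    have := Real.log_le_log hXpos hXub
    rw [Real.log_mul (ne_of_gt hCpos) (by positivity),
      Real.log_mul (ne_of_gt hWpos) (ne_of_gt hWpos)] at this
    linarith
  have hstep : Real.log (Real.log X) ≤ Real.log (Real.log C + 2 * L) :=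
    Real.log_le_log hlogXpos hlogXub
  have hsum_le_prod : Real.log C + 2 * L ≤ Real.log C * (2 * L) := by
    nlinarith
  have hstep2 : Real.log (Real.log C + 2 * L) ≤ Real.log (Real.log C * (2 * L)) :=
    Real.log_le_log (by linarith) hsum_le_prod
  have hsplit : Real.log (Real.log C * (2 * L)) =
      Real.log (Real.log C) + (Real.log 2 + LL) := by
    rw [Real.log_mul (by linarith) (by positivity),
      Real.log_mul (by norm_num) (by linarith)]
  have hlog2 : Real.log 2 ≤ 1 := by
    rw [show (1:ℝ) = Real.log (Real.exp 1) by rw [Real.log_exp]]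
    exact Real.log_le_log two_pos he2
  have hkey : Real.log (Real.log X) ≤ (4 + 2 * Real.log (Real.log C)) * LL := by
    rw [hsplit] at hstep2
    have hp : Real.log (Real.log C) ≤ Real.log (Real.log C) * LL :=
      le_mul_of_one_le_right (by linarith) hLLW1
    linarith [hstep, hstep2, hlog2, hLLW1, hp]
  calc G * Real.log (Real.log X) ≤ G * ((4 + 2 * Real.log (Real.log C)) * LL) :=
        mul_le_mul_of_nonneg_left hkey hG
    _ = (4 + 2 * Real.log (Real.log C)) * (G * LL) := by ring
end
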